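/- Let Γ ∈ ℝ^{n×n} be positive semidefinite, let M : [0, ∞) → ℝ^{n×n} be measurable with τ ↦ ‖M(τ)‖² integrable on [0, ∞), and let U : [0, ∞) → ℝ^{n×n} take positive semidefinite symmetric values, be bounded, and be monotone in the Loewner order (s ≤ t implies U(s) ≤ U(t)). Then for every t ≥ 0, Γ ∘ ∫_0^t M(τ) U(t − τ) M(τ)ᵀ dτ ≤ Γ ∘ ∫_0^∞ M(τ) U(t) M(τ)ᵀ dτ in the Loewner order. -/

import Mathlib

open MeasureTheory Matrix

/-- The spectral norm of a real matrix: the operator norm induced by the Euclidean norms. -/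
noncomputable def specNorm {m n : ℕ} (A : Matrix (Fin m) (Fin n) ℝ) : ℝ :=
  ‖LinearMap.toContinuousLinearMap (Matrix.toEuclideanLin A)‖

lemma specNorm_nonneg {m n : ℕ} (A : Matrix (Fin m) (Fin n) ℝ) : 0 ≤ specNorm A :=
  norm_nonneg _

lemma abs_entry_le_specNorm {m n : ℕ} (A : Matrix (Fin m) (Fin n) ℝ) (i : Fin m) (j : Fin n) :
    |A i j| ≤ specNorm A := by
  set T := LinearMap.toContinuousLinearMap (Matrix.toEuclideanLin A)
  set v : EuclideanSpace ℝ (Fin n) := EuclideanSpace.single j 1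
  have h1 : T v = (WithLp.equiv 2 (Fin m → ℝ)).symm (A *ᵥ Pi.single j 1) := rfl
  have h2 : (A *ᵥ Pi.single j 1) i = A i j := by
    simp [Matrix.mulVec_single]
  have h3 : |(T v) i| ≤ ‖T v‖ := by
    rw [EuclideanSpace.norm_eq]
    have : |(T v) i| = Real.sqrt (|(T v) i| ^ 2) := by
      rw [Real.sqrt_sq (abs_nonneg _)]
    rw [this]
    apply Real.sqrt_le_sqrt
    have := Finset.single_le_sum (f := fun k => ‖(T v) k‖ ^ 2)
      (fun k _ => by positivity) (Finset.mem_univ i)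
    simpa using this
  have h4 : ‖T v‖ ≤ ‖T‖ * ‖v‖ := T.le_opNorm v
  have h5 : ‖v‖ = 1 := by simp [v]
  calc |A i j| = |(T v) i| := by rw [h1, WithLp.equiv_symm_apply, PiLp.toLp_apply, h2]
    _ ≤ ‖T v‖ := h3
    _ ≤ ‖T‖ := by rw [h5] at h4; simpa using h4

/-- Schur product theorem. -/
lemma schur_product {n : ℕ} {A B : Matrix (Fin n) (Fin n) ℝ}
    (hA : A.PosSemidef) (hB : B.PosSemidef) : (A ⊙ B).PosSemidef := by
  obtain ⟨C, hC⟩ : ∃ C : Matrix (Fin n) (Fin n) ℝ, B = Cᴴ * C := by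
    open scoped MatrixOrder in
    exact ⟨CFC.sqrt B, by
      rw [(CFC.sqrt_nonneg B).posSemidef.1.eq, CFC.sqrt_mul_sqrt_self B hB.nonneg]⟩
  refine PosSemidef.of_dotProduct_mulVec_nonneg ?_ ?_
  · ext i j
    simp only [conjTranspose_apply, hadamard_apply, star_trivial]
    rw [← hA.1.apply i j, ← hB.1.apply i j]
    simp
  · intro x
    have key : (star x) ⬝ᵥ ((A ⊙ B) *ᵥ x)
        = ∑ k, (fun i => x i * C k i) ⬝ᵥ (A *ᵥ fun j => x j * C k j) := by
      simp only [star_trivial, dotProduct, mulVec, hadamard_apply, hC, mul_apply,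
        conjTranspose_apply, star_trivial, Finset.mul_sum, Finset.sum_mul]
      calc ∑ i, ∑ j, ∑ m, x i * (A i j * (C m i * C m j) * x j)
          = ∑ i, ∑ m, ∑ j, x i * (A i j * (C m i * C m j) * x j) :=
            Finset.sum_congr rfl fun i _ => Finset.sum_comm
        _ = ∑ m, ∑ i, ∑ j, x i * (A i j * (C m i * C m j) * x j) := Finset.sum_comm
        _ = ∑ m, ∑ i, ∑ j, x i * C m i * (A i j * (x j * C m j)) :=
            Finset.sum_congr rfl fun m _ => Finset.sum_congr rfl fun i _ =>
              Finset.sum_congr rfl fun j _ => by ring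
    rw [key]
    exact Finset.sum_nonneg fun k _ => by
      simpa using hA.dotProduct_mulVec_nonneg (fun j => x j * C k j)

/-- An entrywise set integral of psd-matrix-valued functions is psd. -/
lemma posSemidef_setIntegral {n : ℕ} {s : Set ℝ} (hs : MeasurableSet s)
    {P : ℝ → Matrix (Fin n) (Fin n) ℝ}
    (hint : ∀ i j, IntegrableOn (fun τ => P τ i j) s)
    (hpsd : ∀ τ ∈ s, (P τ).PosSemidef) :
    (Matrix.of fun i j => ∫ τ in s, P τ i j).PosSemidef := by
  refine PosSemidef.of_dotProduct_mulVec_nonneg ?_ ?_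
  · ext i j
    simp only [conjTranspose_apply, of_apply, star_trivial]
    exact setIntegral_congr_fun hs fun τ hτ => (hpsd τ hτ).1.apply i j
  · intro x
    have key : (star x) ⬝ᵥ ((Matrix.of fun i j => ∫ τ in s, P τ i j) *ᵥ x)
        = ∫ τ in s, x ⬝ᵥ (P τ *ᵥ x) := by
      simp only [star_trivial, dotProduct, mulVec, of_apply]
      have h1 : ∀ i j : Fin n, x i * (∫ τ in s, P τ i j) * x j
          = ∫ τ in s, x i * P τ i j * x j := by
        intro i j
        rw [← MeasureTheory.integral_const_mul, ← MeasureTheory.integral_mul_const]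
      calc ∑ i, x i * ∑ j, (∫ τ in s, P τ i j) * x j
          = ∑ i, ∑ j, x i * (∫ τ in s, P τ i j) * x j := by
            refine Finset.sum_congr rfl fun i _ => ?_
            rw [Finset.mul_sum]; exact Finset.sum_congr rfl fun j _ => by ring
        _ = ∑ i, ∑ j, ∫ τ in s, x i * P τ i j * x j := by
            simp only [h1]
        _ = ∑ i, ∫ τ in s, ∑ j, x i * P τ i j * x j := by
            refine Finset.sum_congr rfl fun i _ => ?_
            exact (MeasureTheory.integral_finset_sum _
              fun j _ => ((hint i j).const_mul _).mul_const _).symm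
        _ = ∫ τ in s, ∑ i, ∑ j, x i * P τ i j * x j := by
            refine (MeasureTheory.integral_finset_sum _ fun i _ => ?_).symm
            exact MeasureTheory.integrable_finset_sum _
              fun j _ => ((hint i j).const_mul _).mul_const _
        _ = ∫ τ in s, x ⬝ᵥ (P τ *ᵥ x) := by
            refine integral_congr_ae (Filter.Eventually.of_forall fun τ => ?_)
            simp only [dotProduct, mulVec, Finset.mul_sum]
            exact Finset.sum_congr rfl fun i _ => Finset.sum_congr rfl fun j _ => by ring
    rw [key]
    exact setIntegral_nonneg hs fun τ hτ => by simpa using (hpsd τ hτ).dotProduct_mulVec_nonneg x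

/-- If `U` is bounded, psd-valued and Loewner-monotone on `[0,∞)` and
`‖M‖²` is integrable on `[0,∞)`, then for every `t ≥ 0`,
`Γ ∘ ∫₀ᵗ M(τ) U(t−τ) M(τ)ᵀ dτ ≤ Γ ∘ ∫₀^∞ M(τ) U(t) M(τ)ᵀ dτ` in the Loewner order. -/
theorem convolution_le_loopGain {n : ℕ}
    (Γ : Matrix (Fin n) (Fin n) ℝ) (hΓ : Γ.PosSemidef)
    (M U : ℝ → Matrix (Fin n) (Fin n) ℝ)
    (hMmeas : ∀ i j, Measurable fun τ => M τ i j)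
    (hMint : IntegrableOn (fun τ => specNorm (M τ) ^ 2) (Set.Ici 0))
    (hUpsd : ∀ s, 0 ≤ s → (U s).PosSemidef)
    (hUbdd : ∃ c, ∀ s, 0 ≤ s → specNorm (U s) ≤ c)
    (hUmono : ∀ s t : ℝ, 0 ≤ s → s ≤ t → (U t - U s).PosSemidef)
    (t : ℝ) (ht : 0 ≤ t) :
    ((Γ ⊙ Matrix.of fun i j => ∫ τ in Set.Ici (0:ℝ), (M τ * U t * (M τ)ᵀ) i j)
      - (Γ ⊙ Matrix.of fun i j =>
          ∫ τ in Set.Icc (0:ℝ) t, (M τ * U (t - τ) * (M τ)ᵀ) i j)).PosSemidef := by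
  classical
  obtain ⟨c, hc⟩ := hUbdd
  set c₀ : ℝ := max c 0 with hc₀
  have hc₀0 : 0 ≤ c₀ := le_max_right _ _
  -- entrywise bound on U
  have hUent : ∀ s, 0 ≤ s → ∀ k l, |U s k l| ≤ c₀ := fun s hs k l =>
    (abs_entry_le_specNorm _ _ _).trans ((hc s hs).trans (le_max_left _ _))
  -- entry expansion of M X Mᵀ
  have hprod : ∀ τ (X : Matrix (Fin n) (Fin n) ℝ) (i j : Fin n),
      (M τ * X * (M τ)ᵀ) i j = ∑ l, (∑ k, M τ i k * X k l) * M τ j l := by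
    intro τ X i j
    simp [Matrix.mul_apply, Matrix.transpose_apply]
  -- uniform bound on entries of M X Mᵀ
  have habs : ∀ τ (X : Matrix (Fin n) (Fin n) ℝ), (∀ k l, |X k l| ≤ c₀) → ∀ i j,
      |(M τ * X * (M τ)ᵀ) i j| ≤ (n * n) * c₀ * specNorm (M τ) ^ 2 := by
    intro τ X hX i j
    rw [hprod]
    calc |∑ l, (∑ k, M τ i k * X k l) * M τ j l|
        ≤ ∑ l, |(∑ k, M τ i k * X k l) * M τ j l| := Finset.abs_sum_le_sum_abs _ _
      _ ≤ ∑ _l : Fin n, (n * (specNorm (M τ) * c₀)) * specNorm (M τ) := by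
          refine Finset.sum_le_sum fun l _ => ?_
          rw [abs_mul]
          refine mul_le_mul ?_ (abs_entry_le_specNorm _ _ _) (abs_nonneg _) ?_
          · calc |∑ k, M τ i k * X k l| ≤ ∑ k, |M τ i k * X k l| :=
                Finset.abs_sum_le_sum_abs _ _
              _ ≤ ∑ _k : Fin n, specNorm (M τ) * c₀ :=
                Finset.sum_le_sum fun k _ => by
                  rw [abs_mul]
                  exact mul_le_mul (abs_entry_le_specNorm _ _ _) (hX k l)
                    (abs_nonneg _) (specNorm_nonneg _)
              _ = n * (specNorm (M τ) * c₀) := by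
                  simp [Finset.sum_const, nsmul_eq_mul]
          · have := specNorm_nonneg (M τ)
            positivity
      _ = (n * n) * c₀ * specNorm (M τ) ^ 2 := by
          simp [Finset.sum_const, nsmul_eq_mul]
          ring
  -- measurability of entries of M X Mᵀ for measurable X
  have hmeasP : ∀ (X : ℝ → Matrix (Fin n) (Fin n) ℝ),
      (∀ k l, Measurable fun τ => X τ k l) → ∀ i j,
      Measurable fun τ => (M τ * X τ * (M τ)ᵀ) i j := by
    intro X hX i j
    have : (fun τ => (M τ * X τ * (M τ)ᵀ) i j)
        = fun τ => ∑ l, (∑ k, M τ i k * X τ k l) * M τ j l := funext fun τ => hprod τ _ i j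
    rw [this]
    exact Finset.measurable_sum _ fun l _ =>
      (Finset.measurable_sum _ fun k _ => (hMmeas i k).mul (hX k l)).mul (hMmeas j l)
  -- the dominating integrable function
  have hdom : IntegrableOn (fun τ => (n * n) * c₀ * specNorm (M τ) ^ 2) (Set.Ici 0) :=
    hMint.const_mul _
  -- V : measurable monotone extension of U
  set V : ℝ → Matrix (Fin n) (Fin n) ℝ := fun s => U (max s 0) with hV
  have hVpsd : ∀ s, (V s).PosSemidef := fun s => hUpsd _ (le_max_right _ _)
  have hq : ∀ x : Fin n → ℝ, Monotone fun s => x ⬝ᵥ (V s *ᵥ x) := by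
    intro x a b hab
    have h := (hUmono (max a 0) (max b 0) (le_max_right _ _)
      (max_le_max hab le_rfl)).dotProduct_mulVec_nonneg x
    simpa [Matrix.sub_mulVec, dotProduct_sub, sub_nonneg] using h
  have hVmeas : ∀ k l, Measurable fun s => V s k l := by
    intro k l
    have hsym : ∀ s, V s l k = V s k l := fun s => by
      simpa using (hVpsd s).1.apply k l
    have key : ∀ s, V s k l =
        ((Pi.single k 1 + Pi.single l 1) ⬝ᵥ (V s *ᵥ (Pi.single k 1 + Pi.single l 1))
          - Pi.single k 1 ⬝ᵥ (V s *ᵥ Pi.single k 1)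
          - Pi.single l 1 ⬝ᵥ (V s *ᵥ Pi.single l 1)) / 2 := by
      intro s
      have e : ∀ a b : Fin n, Pi.single a (1:ℝ) ⬝ᵥ (V s *ᵥ Pi.single b 1) = V s a b := by
        intro a b
        rw [Matrix.mulVec_single, single_dotProduct]
        simp
      rw [Matrix.mulVec_add, dotProduct_add, add_dotProduct, add_dotProduct, e, e, e, e, hsym]
      ring
    have hfe : (fun s => V s k l) = fun s =>
        ((Pi.single k 1 + Pi.single l 1) ⬝ᵥ (V s *ᵥ (Pi.single k 1 + Pi.single l 1))
          - Pi.single k 1 ⬝ᵥ (V s *ᵥ Pi.single k 1)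
          - Pi.single l 1 ⬝ᵥ (V s *ᵥ Pi.single l 1)) / 2 := funext key
    rw [hfe]
    exact (((hq _).measurable.sub (hq _).measurable).sub (hq _).measurable).div_const _
  -- integrability of f := entries of M (U t) Mᵀ on [0,∞)
  have hfint : ∀ i j, IntegrableOn (fun τ => (M τ * U t * (M τ)ᵀ) i j) (Set.Ici 0) := by
    intro i j
    refine hdom.mono' (hmeasP (fun _ => U t) (fun k l => measurable_const) i j
      |>.aestronglyMeasurable) ?_
    exact Filter.Eventually.of_forall fun τ => by
      rw [Real.norm_eq_abs]; exact habs τ _ (hUent t ht) i j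
  -- integrability of g := entries of M (U (t-τ)) Mᵀ on [0,t]
  have hgint : ∀ i j, IntegrableOn (fun τ => (M τ * U (t - τ) * (M τ)ᵀ) i j)
      (Set.Icc 0 t) := by
    intro i j
    have hVint : IntegrableOn (fun τ => (M τ * V (t - τ) * (M τ)ᵀ) i j) (Set.Icc 0 t) := by
      refine (hdom.mono_set Set.Icc_subset_Ici_self).mono'
        ((hmeasP (fun τ => V (t - τ))
          (fun k l => (hVmeas k l).comp (measurable_const.sub measurable_id)) i j)
          |>.aestronglyMeasurable) ?_
      refine Filter.Eventually.of_forall fun τ => ?_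
      rw [Real.norm_eq_abs]
      refine habs τ _ (fun k l => ?_) i j
      exact (abs_entry_le_specNorm _ _ _).trans
        ((hc _ (le_max_right _ _)).trans (le_max_left _ _))
    refine hVint.congr_fun (fun τ hτ => ?_) measurableSet_Icc
    have : max (t - τ) 0 = t - τ := max_eq_left (by linarith [hτ.2])
    simp only [hV, this]
  -- the two psd pieces
  set P1 : Matrix (Fin n) (Fin n) ℝ :=
    Matrix.of fun i j => ∫ τ in Set.Icc (0:ℝ) t, (M τ * (U t - U (t - τ)) * (M τ)ᵀ) i j with hP1
  set P2 : Matrix (Fin n) (Fin n) ℝ :=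
    Matrix.of fun i j => ∫ τ in Set.Ioi t, (M τ * U t * (M τ)ᵀ) i j with hP2
  have hsubentry : ∀ τ (i j : Fin n), (M τ * (U t - U (t - τ)) * (M τ)ᵀ) i j
      = (M τ * U t * (M τ)ᵀ) i j - (M τ * U (t - τ) * (M τ)ᵀ) i j := by
    intro τ i j
    rw [Matrix.mul_sub, Matrix.sub_mul]
    rfl
  have hdiffint : ∀ i j, IntegrableOn
      (fun τ => (M τ * (U t - U (t - τ)) * (M τ)ᵀ) i j) (Set.Icc 0 t) := by
    intro i j
    have hsubI : IntegrableOn (fun τ => (M τ * U t * (M τ)ᵀ) i j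
        - (M τ * U (t - τ) * (M τ)ᵀ) i j) (Set.Icc 0 t) :=
      ((hfint i j).mono_set Set.Icc_subset_Ici_self).sub (hgint i j)
    exact hsubI.congr_fun (fun τ _ => (hsubentry τ i j).symm) measurableSet_Icc
  have hP1psd : P1.PosSemidef := by
    refine posSemidef_setIntegral measurableSet_Icc hdiffint fun τ hτ => ?_
    have h := (hUmono (t - τ) t (by linarith [hτ.2]) (by linarith [hτ.1]))
    have := h.mul_mul_conjTranspose_same (M τ)
    rwa [Matrix.conjTranspose_eq_transpose_of_trivial] at this
  have hP2psd : P2.PosSemidef := by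
    refine posSemidef_setIntegral measurableSet_Ioi
      (fun i j => (hfint i j).mono_set fun x hx =>
        le_trans ht (le_of_lt hx)) fun τ _ => ?_
    have := (hUpsd t ht).mul_mul_conjTranspose_same (M τ)
    rwa [Matrix.conjTranspose_eq_transpose_of_trivial] at this
  -- split the integral
  have hsplit : (Matrix.of fun i j => ∫ τ in Set.Ici (0:ℝ), (M τ * U t * (M τ)ᵀ) i j)
      - (Matrix.of fun i j => ∫ τ in Set.Icc (0:ℝ) t, (M τ * U (t - τ) * (M τ)ᵀ) i j)
      = P1 + P2 := by
    ext i j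
    simp only [Matrix.sub_apply, Matrix.add_apply, Matrix.of_apply, hP1, hP2]
    have hsetsplit : ∫ τ in Set.Ici (0:ℝ), (M τ * U t * (M τ)ᵀ) i j
        = (∫ τ in Set.Icc (0:ℝ) t, (M τ * U t * (M τ)ᵀ) i j)
          + ∫ τ in Set.Ioi t, (M τ * U t * (M τ)ᵀ) i j := by
      rw [← Set.Icc_union_Ioi_eq_Ici ht]
      refine setIntegral_union ?_ measurableSet_Ioi
        ((hfint i j).mono_set Set.Icc_subset_Ici_self)
        ((hfint i j).mono_set fun x hx => le_trans ht (le_of_lt hx))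
      exact Set.disjoint_left.mpr fun x hx1 hx2 => absurd hx1.2 (not_le.mpr hx2)
    have hsub : ∫ τ in Set.Icc (0:ℝ) t, (M τ * (U t - U (t - τ)) * (M τ)ᵀ) i j
        = (∫ τ in Set.Icc (0:ℝ) t, (M τ * U t * (M τ)ᵀ) i j)
          - ∫ τ in Set.Icc (0:ℝ) t, (M τ * U (t - τ) * (M τ)ᵀ) i j := by
      rw [← MeasureTheory.integral_sub ((hfint i j).mono_set Set.Icc_subset_Ici_self)
        (hgint i j)]
      exact integral_congr_ae (Filter.Eventually.of_forall fun τ => hsubentry τ i j)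
    rw [hsetsplit, hsub]
    ring
  have hhad : ∀ X Y : Matrix (Fin n) (Fin n) ℝ, Γ ⊙ X - Γ ⊙ Y = Γ ⊙ (X - Y) := by
    intro X Y
    ext i j
    simp [Matrix.hadamard_apply, Matrix.sub_apply, mul_sub]
  rw [hhad, hsplit]
  exact schur_product hΓ (hP1psd.add hP2psd)
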